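/- arXiv:1408.0919 — 4 statements merged into one kernel-verified Lean document; each statement's English description precedes it below -/
import Mathlib

section
/- Let A ⊆ ℝ be a Lebesgue measurable set and c ≥ 1/2. Define A'_c to be the set of points τ ∈ ℝ such that λ(A ∩ [a,b])/(b−a) → 1 as a, b → τ subject to a < b and max(|b−τ|, |a−τ|)/(b−a) ≤ c. Then the symmetric difference A △ A'_c has Lebesgue measure zero. -/
/-!
An interval `[a, b]` is the closed ball of radius `(b - a) / 2` about its midpoint, and when
`max (|b - τ|, |a - τ|) ≤ c (b - a)` the point `τ` lies within `2c` times that radius of the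
midpoint. Lebesgue's differentiation theorem for balls with moving centres then says that at almost
every `τ ∈ A` the relative measure of `A` in such intervals tends to `1`, and at almost every
`τ ∉ A` that of `Aᶜ` does, so that of `A` tends to `0`. For `c ≥ 1/2` the admissible intervals
include the symmetric ones `[τ - r, τ + r]`, so the limit is taken along a nontrivial filter and
cannot be both `0` and `1`.
-/

open MeasureTheory Set Filter Topology Metric

/-- The set `I_c(τ)`, as pairs `(a, b)`. -/
def coneIntervals (c τ : ℝ) : Set (ℝ × ℝ) :=
  {p | p.1 < p.2 ∧ max |p.2 - τ| |p.1 - τ| / (p.2 - p.1) ≤ c}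

noncomputable def intervalDensity (S : Set ℝ) (p : ℝ × ℝ) : ℝ :=
  (volume (S ∩ Icc p.1 p.2)).toReal / (p.2 - p.1)

theorem tendsto_nhdsWithin_coneIntervals_iff {f : ℝ × ℝ → ℝ} {c τ L : ℝ} :
    Tendsto f (𝓝[coneIntervals c τ] (τ, τ)) (𝓝 L) ↔
      ∀ ε > 0, ∃ δ > 0, ∀ a b : ℝ, a < b → max |b - τ| |a - τ| / (b - a) ≤ c →
        |a - τ| < δ → |b - τ| < δ → |f (a, b) - L| < ε := by
  simp only [Metric.tendsto_nhdsWithin_nhds, Prod.forall, coneIntervals, mem_ofPred_eq,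
    Prod.dist_eq, Real.dist_eq, max_lt_iff, and_imp]

theorem tendsto_halfLength_coneIntervals (c τ : ℝ) :
    Tendsto (fun p : ℝ × ℝ => (p.2 - p.1) / 2) (𝓝[coneIntervals c τ] (τ, τ)) (𝓝[>] 0) := by
  refine tendsto_nhdsWithin_iff.2 ⟨?_, eventually_mem_nhdsWithin.mono fun p hp => ?_⟩
  · exact (((continuous_snd.sub continuous_fst).div_const 2).tendsto' (τ, τ) 0
      (by simp)).mono_left nhdsWithin_le_nhds
  · exact div_pos (sub_pos.2 hp.1) two_pos

theorem mem_closedBall_midpoint_of_mem_coneIntervals {c τ : ℝ} {p : ℝ × ℝ}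
    (hp : p ∈ coneIntervals c τ) :
    τ ∈ closedBall ((p.1 + p.2) / 2) (2 * c * ((p.2 - p.1) / 2)) := by
  obtain ⟨hlt, hcone⟩ := hp
  have hmax : max |p.2 - τ| |p.1 - τ| ≤ c * (p.2 - p.1) := (div_le_iff₀ (sub_pos.2 hlt)).1 hcone
  have hb := abs_le.1 ((le_max_left _ _).trans hmax)
  have ha := abs_le.1 ((le_max_right _ _).trans hmax)
  rw [mem_closedBall, Real.dist_eq, abs_le]
  constructor <;> linarith [ha.1, ha.2, hb.1, hb.2]

theorem ae_tendsto_measure_inter_Icc_div (μ : Measure ℝ) [IsUnifLocDoublingMeasure μ]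
    [IsLocallyFiniteMeasure μ] (S : Set ℝ) (c : ℝ) :
    ∀ᵐ τ ∂μ.restrict S, Tendsto (fun p : ℝ × ℝ => μ (S ∩ Icc p.1 p.2) / μ (Icc p.1 p.2))
      (𝓝[coneIntervals c τ] (τ, τ)) (𝓝 1) := by
  filter_upwards [IsUnifLocDoublingMeasure.ae_tendsto_measure_inter_div μ S (2 * c)] with τ hτ
  simpa only [Real.Icc_eq_closedBall] using
    hτ (fun p => (p.1 + p.2) / 2) (fun p => (p.2 - p.1) / 2)
      (tendsto_halfLength_coneIntervals c τ)
      (eventually_mem_nhdsWithin.mono fun _ hp => mem_closedBall_midpoint_of_mem_coneIntervals hp)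

theorem intervalDensity_eq_toReal {S : Set ℝ} {p : ℝ × ℝ} (hp : p.1 ≤ p.2) :
    intervalDensity S p = (volume (S ∩ Icc p.1 p.2) / volume (Icc p.1 p.2)).toReal := by
  rw [intervalDensity, ENNReal.toReal_div, Real.volume_Icc,
    ENNReal.toReal_ofReal (sub_nonneg.2 hp)]

theorem ae_tendsto_intervalDensity (S : Set ℝ) (c : ℝ) :
    ∀ᵐ τ ∂volume.restrict S,
      Tendsto (intervalDensity S) (𝓝[coneIntervals c τ] (τ, τ)) (𝓝 1) := by
  filter_upwards [ae_tendsto_measure_inter_Icc_div volume S c] with τ hτ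
  refine ((ENNReal.tendsto_toReal ENNReal.one_ne_top).comp hτ).congr' ?_
  filter_upwards [eventually_mem_nhdsWithin] with p hp
  exact (intervalDensity_eq_toReal hp.1.le).symm

theorem intervalDensity_add_compl {A : Set ℝ} (hA : MeasurableSet A) {p : ℝ × ℝ}
    (hp : p.1 < p.2) : intervalDensity A p + intervalDensity Aᶜ p = 1 := by
  have hfin : volume (Icc p.1 p.2) ≠ ⊤ := measure_Icc_lt_top.ne
  have hsplit : volume (Icc p.1 p.2 ∩ A) + volume (Icc p.1 p.2 \ A) = volume (Icc p.1 p.2) :=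
    measure_inter_add_sdiff _ hA
  rw [intervalDensity, intervalDensity, ← add_div, div_eq_one_iff_eq (sub_pos.2 hp).ne',
    ← ENNReal.toReal_add (measure_ne_top_of_subset inter_subset_right hfin)
      (measure_ne_top_of_subset inter_subset_right hfin), inter_comm, ← sdiff_eq_compl_inter,
    hsplit, Real.volume_Icc, ENNReal.toReal_ofReal (sub_pos.2 hp).le]

theorem nhdsWithin_coneIntervals_neBot {c : ℝ} (hc : 1 / 2 ≤ c) (τ : ℝ) :
    (𝓝[coneIntervals c τ] (τ, τ)).NeBot := by
  refine mem_closure_iff_nhdsWithin_neBot.1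
    (mem_closure_of_tendsto (f := fun r : ℝ => (τ - r, τ + r)) (b := 𝓝[>] 0) ?_ ?_)
  · exact (((continuous_const.sub continuous_id).prodMk (continuous_const.add continuous_id)).tendsto'
      0 (τ, τ) (by simp)).mono_left nhdsWithin_le_nhds
  · filter_upwards [self_mem_nhdsWithin] with r (hr : 0 < r)
    refine ⟨by linarith, ?_⟩
    simp only [add_sub_cancel_left, sub_sub_cancel_left, abs_neg, abs_of_pos hr, max_self]
    rw [show τ + r - (τ - r) = 2 * r by ring, div_le_iff₀ (by positivity)]
    nlinarith

/-- For a measurable `A ⊆ ℝ` and `c ≥ 1/2`, the set `A'_c` of cone-density points of `A`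
(the points `τ` where `λ(A ∩ [a,b])/(b-a) → 1` as `a, b → τ` with `a < b` and
`max(|b-τ|,|a-τ|)/(b-a) ≤ c`) differs from `A` by a Lebesgue-null set. -/
theorem cone_density_symmDiff_null (A : Set ℝ) (hA : MeasurableSet A)
    (c : ℝ) (hc : 1/2 ≤ c) :
    volume (symmDiff A {τ : ℝ | ∀ ε > 0, ∃ δ > 0, ∀ a b : ℝ, a < b →
      max |b - τ| |a - τ| / (b - a) ≤ c → |a - τ| < δ → |b - τ| < δ →
      |(volume (A ∩ Icc a b)).toReal / (b - a) - 1| < ε}) = 0 := by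
  rw [measure_symmDiff_eq_zero_iff, eventuallyEq_set]
  filter_upwards [(ae_restrict_iff' hA).1 (ae_tendsto_intervalDensity A c),
    (ae_restrict_iff' hA.compl).1 (ae_tendsto_intervalDensity Aᶜ c)] with τ hin hout
  refine ⟨fun hτ => tendsto_nhdsWithin_coneIntervals_iff.1 (hin hτ),
    fun hτ => by_contra fun hτA => ?_⟩
  have hone : Tendsto (intervalDensity A) (𝓝[coneIntervals c τ] (τ, τ)) (𝓝 1) :=
    tendsto_nhdsWithin_coneIntervals_iff.2 hτ
  have hzero : Tendsto (intervalDensity A) (𝓝[coneIntervals c τ] (τ, τ)) (𝓝 0) := by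
    have h := (hout hτA).const_sub 1
    rw [sub_self] at h
    refine h.congr' ?_
    filter_upwards [eventually_mem_nhdsWithin] with p hp
    rw [← intervalDensity_add_compl hA hp.1, add_sub_cancel_right]
  have := nhdsWithin_coneIntervals_neBot hc τ
  exact zero_ne_one (tendsto_nhds_unique hzero hone)
end

section
/- Let T = [t₀,ϑ], G ⊂ T × ℝⁿ compact, P ⊂ ℝ^p and Q ⊂ ℝ^q compact, and f : T × ℝⁿ × P × Q → ℝⁿ continuous. Let X be a set of functions x : T → ℝⁿ with graph in G satisfying the uniform Lipschitz bound ‖x(τ) − x(s)‖ ≤ κ|τ−s| where κ = max over G×P×Q of ‖f‖. Let v : T → Q be measurable and fix c ≥ 1/2. Then for almost every τ ∈ T: sup over u ∈ P and x ∈ X of ‖(1/(b−a)) ∫_{[a,b]} f(s, x(s), u, v(s)) ds − f(τ, x(τ), u, v(τ))‖ → 0 as a, b → τ, a,b ∈ T, along pairs (a,b) with b > a and max(|b−τ|,|a−τ|)/(b−a) ≤ c. -/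
/-!
On the compact set `K` where the arguments `(s, x s, u, v s)` live, the uniform continuity of `f`
gives, for every `ε > 0`, a constant `C` with `‖f z - f z'‖ ≤ ε + C · dist z z'` on `K`. Applied
at `z = (s, x s, u, v s)` and `z' = (τ, x τ, u, v τ)`, the Lipschitz bound on `x` makes the
distance at most `(1 + |κ|)|s - τ| + ‖v s - v τ‖`, uniformly in `u` and `x`. Averaging over
`[a, b]`, everything is then controlled by the average of `‖v s - v τ‖`, which tends to `0` at
every Lebesgue point `τ` of `v`: under the cone condition `[a, b]` lies in the closed ball of
radius `r = max |b - τ| |a - τ| ≤ c (b - a)` about `τ`, so this average is at most `2c` times the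
average over the ball.
-/

open MeasureTheory Set Filter intervalIntegral Metric Topology

theorem mul_lt_of_le_div_add_one {L r ε : ℝ} (hL : 0 ≤ L) (hε : 0 < ε) (hr : r ≤ ε / (L + 1)) :
    L * r < ε := by
  calc L * r ≤ L * (ε / (L + 1)) := by gcongr
    _ < ε := by
      rw [mul_div_assoc', div_lt_iff₀ (by positivity)]
      linarith

theorem Icc_subset_closedBall_max_abs_sub (a b τ : ℝ) :
    Icc a b ⊆ closedBall τ (max |b - τ| |a - τ|) := by
  rw [Real.closedBall_eq_Icc]
  apply Icc_subset_Icc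
  · linarith [le_max_right |b - τ| |a - τ|, neg_abs_le (a - τ)]
  · linarith [le_max_left |b - τ| |a - τ|, le_abs_self (b - τ)]

theorem dist_prod_prod_prod_le {α β γ δ : Type*} [PseudoMetricSpace α] [PseudoMetricSpace β]
    [PseudoMetricSpace γ] [PseudoMetricSpace δ] (s s' : α) (y y' : β) (u : γ) (w w' : δ) :
    dist (s, y, u, w) (s', y', u, w') ≤ dist s s' + dist y y' + dist w w' := by
  simp only [Prod.dist_eq, dist_self]
  refine max_le ?_ (max_le ?_ (max_le ?_ ?_)) <;>
    linarith [dist_nonneg (x := s) (y := s'), dist_nonneg (x := y) (y := y'),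
      dist_nonneg (x := w) (y := w')]

theorem IsCompact.exists_dist_le_add_mul_dist {α β : Type*} [PseudoMetricSpace α]
    [PseudoMetricSpace β] {K : Set α} (hK : IsCompact K) {Φ : α → β} (hΦ : ContinuousOn Φ K)
    {ε : ℝ} (hε : 0 < ε) :
    ∃ C, 0 ≤ C ∧ ∀ z ∈ K, ∀ z' ∈ K, dist (Φ z) (Φ z') ≤ ε + C * dist z z' := by
  obtain ⟨η, hη, hΦη⟩ :=
    Metric.uniformContinuousOn_iff.1 (hK.uniformContinuousOn_of_continuous hΦ) ε hε
  obtain ⟨D, hD⟩ := Metric.isBounded_iff.1 (hK.image_of_continuousOn hΦ).isBounded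
  set D' := max D 0
  refine ⟨D' / η, by positivity, fun z hz z' hz' => ?_⟩
  rcases lt_or_ge (dist z z') η with hzz' | hzz'
  · have : 0 ≤ D' / η * dist z z' := by positivity
    linarith [hΦη z hz z' hz' hzz']
  · calc dist (Φ z) (Φ z') ≤ D' :=
          (hD (mem_image_of_mem Φ hz) (mem_image_of_mem Φ hz')).trans (le_max_left _ _)
      _ ≤ D' / η * dist z z' := by
          rw [div_mul_eq_mul_div, le_div_iff₀ hη]
          exact mul_le_mul_of_nonneg_left hzz' (le_max_right _ _)
      _ ≤ ε + D' / η * dist z z' := le_add_of_nonneg_left hε.le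

theorem Continuous.integrableOn_comp_of_mapsTo {α E Ω : Type*} [MeasurableSpace Ω]
    {μ : Measure Ω} [TopologicalSpace α] [NormedAddCommGroup E] {Φ : α → E} (hΦ : Continuous Φ)
    {K : Set α} (hK : IsCompact K) {γ : Ω → α} {S : Set Ω} (hS : MeasurableSet S)
    (hμS : μ S < ⊤) (hγ : AEStronglyMeasurable γ (μ.restrict S)) (hγK : MapsTo γ S K) :
    IntegrableOn (Φ ∘ γ) S μ := by
  obtain ⟨M, hM⟩ := (hK.image hΦ).isBounded.exists_norm_le
  refine .of_bound hμS (hΦ.comp_aestronglyMeasurable hγ) M ?_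
  filter_upwards [ae_restrict_mem hS] with s hs
  exact hM _ (mem_image_of_mem Φ (hγK hs))

theorem intervalIntegral_le_two_mul_setAverage_closedBall {g : ℝ → ℝ} {a b τ r : ℝ}
    (hab : a ≤ b) (hsub : Icc a b ⊆ closedBall τ r) (hg0 : ∀ s, 0 ≤ g s)
    (hg : IntegrableOn g (closedBall τ r)) :
    ∫ s in a..b, g s ≤ 2 * r * ⨍ s in closedBall τ r, g s := by
  have hr : 0 ≤ r := nonempty_closedBall.1 ⟨a, hsub ⟨le_rfl, hab⟩⟩
  rw [← Real.volume_real_closedBall hr, ← smul_eq_mul,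
    measure_smul_setAverage _ measure_closedBall_lt_top.ne, integral_of_le hab]
  exact setIntegral_mono_set hg (.of_forall hg0)
    (Ioc_subset_Icc_self.trans hsub).eventuallyLE

theorem norm_intervalAverage_sub_le {E : Type*} [NormedAddCommGroup E] [NormedSpace ℝ E]
    [CompleteSpace E] {h : ℝ → E} {g : ℝ → ℝ} {a b A B : ℝ} {y : E} (hab : a < b)
    (hh : IntegrableOn h (Icc a b)) (hg : IntegrableOn g (Icc a b))
    (hbound : ∀ s ∈ Icc a b, ‖h s - y‖ ≤ A + B * g s) :
    ‖(b - a)⁻¹ • (∫ s in a..b, h s) - y‖ ≤ A + B * ((b - a)⁻¹ * ∫ s in a..b, g s) := by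
  have hba : 0 < b - a := sub_pos.2 hab
  rw [← intervalIntegrable_iff_integrableOn_Icc_of_le hab.le] at hh hg
  have hsplit : (b - a)⁻¹ • (∫ s in a..b, h s) - y = (b - a)⁻¹ • ∫ s in a..b, (h s - y) := by
    rw [integral_sub hh intervalIntegrable_const, intervalIntegral.integral_const, smul_sub,
      smul_smul, inv_mul_cancel₀ hba.ne', one_smul]
  have hint : ‖∫ s in a..b, (h s - y)‖ ≤ ∫ s in a..b, (A + B * g s) :=
    norm_integral_le_of_norm_le hab.le (.of_forall fun s hs => hbound s (Ioc_subset_Icc_self hs))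
      (intervalIntegrable_const.add (hg.const_mul B))
  rw [hsplit, norm_smul, norm_inv, Real.norm_of_nonneg hba.le]
  calc (b - a)⁻¹ * ‖∫ s in a..b, (h s - y)‖ ≤ (b - a)⁻¹ * ∫ s in a..b, (A + B * g s) := by
        gcongr
    _ = A + B * ((b - a)⁻¹ * ∫ s in a..b, g s) := by
        rw [integral_add intervalIntegrable_const (hg.const_mul B),
          intervalIntegral.integral_const, intervalIntegral.integral_const_mul, smul_eq_mul]
        field_simp

theorem ae_tendsto_setAverage_closedBall_norm_sub {E : Type*} [NormedAddCommGroup E]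
    {w : ℝ → E} (hw : LocallyIntegrable w) :
    ∀ᵐ τ, Tendsto (fun r => ⨍ s in closedBall τ r, ‖w s - w τ‖) (𝓝[>] 0) (𝓝 0) := by
  filter_upwards [IsUnifLocDoublingMeasure.ae_tendsto_average_norm_sub volume hw 1] with τ hτ
  exact hτ (fun _ => τ) id tendsto_id
    (eventually_nhdsWithin_of_forall fun r hr => by simpa using le_of_lt hr)

theorem ae_restrict_cone_intervalAverage_norm_sub_lt {E : Type*} [NormedAddCommGroup E]
    {w : ℝ → E} {S : Set ℝ} (hS : MeasurableSet S) (hw : IntegrableOn w S) {c : ℝ}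
    (hc : 0 < c) :
    ∀ᵐ τ ∂volume.restrict S, ∀ ε > 0, ∃ δ > 0, ∀ a b, Icc a b ⊆ S → a < b →
      max |b - τ| |a - τ| ≤ c * (b - a) → max |b - τ| |a - τ| < δ →
      (b - a)⁻¹ * ∫ s in a..b, ‖w s - w τ‖ < ε := by
  -- `w` is only integrable on `S`, so Lebesgue's theorem is applied to its indicator.
  set g := S.indicator w
  have hg : Integrable g := (integrable_indicator_iff hS).2 hw
  filter_upwards [ae_restrict_of_ae (ae_tendsto_setAverage_closedBall_norm_sub
    hg.locallyIntegrable), ae_restrict_mem hS] with τ hτ hτS ε hε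
  obtain ⟨δ, hδ, hδavg⟩ := mem_nhdsGT_iff_exists_Ioc_subset.1
    (hτ.eventually (eventually_lt_nhds (div_pos hε (mul_pos two_pos hc))))
  refine ⟨δ, hδ, fun a b hsub hab hcone hrδ => ?_⟩
  set r := max |b - τ| |a - τ|
  have hr : 0 < r := by
    linarith [le_max_left |b - τ| |a - τ|, le_max_right |b - τ| |a - τ|,
      le_abs_self (b - τ), neg_abs_le (a - τ)]
  have hgw : ∫ s in a..b, ‖w s - w τ‖ = ∫ s in a..b, ‖g s - g τ‖ := by
    refine integral_congr fun s hs => ?_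
    rw [uIcc_of_le hab.le] at hs
    simp only [g, indicator_of_mem (hsub hs), indicator_of_mem hτS]
  have havg : ⨍ s in closedBall τ r, ‖g s - g τ‖ < ε / (2 * c) := hδavg ⟨hr, hrδ.le⟩
  have havg0 : 0 ≤ ⨍ s in closedBall τ r, ‖g s - g τ‖ := by
    rw [setAverage_eq]; exact smul_nonneg (by positivity) (integral_nonneg fun _ => norm_nonneg _)
  have hball := intervalIntegral_le_two_mul_setAverage_closedBall hab.le
    (Icc_subset_closedBall_max_abs_sub a b τ) (fun s => norm_nonneg (g s - g τ))
    (hg.integrableOn.sub (integrableOn_const measure_closedBall_lt_top.ne)).norm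
  rw [hgw, inv_mul_lt_iff₀ (sub_pos.2 hab)]
  calc ∫ s in a..b, ‖g s - g τ‖ ≤ 2 * r * ⨍ s in closedBall τ r, ‖g s - g τ‖ := hball
    _ ≤ 2 * (c * (b - a)) * ⨍ s in closedBall τ r, ‖g s - g τ‖ := by gcongr
    _ < 2 * (c * (b - a)) * (ε / (2 * c)) := by gcongr
    _ = (b - a) * ε := by field_simp

theorem ae_restrict_uniform_cone_average_sub_lt {α E W ι : Type*} [PseudoMetricSpace α]
    [NormedAddCommGroup E] [NormedSpace ℝ E] [CompleteSpace E] [NormedAddCommGroup W]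
    {t₀ ϑ : ℝ} {K : Set α} (hK : IsCompact K) {Φ : α → E} (hΦ : ContinuousOn Φ K)
    {γ : ι → ℝ → α} (hγK : ∀ i, MapsTo (γ i) (Icc t₀ ϑ) K)
    (hΦγ : ∀ i, IntegrableOn (fun s => Φ (γ i s)) (Icc t₀ ϑ))
    {w : ℝ → W} (hw : IntegrableOn w (Icc t₀ ϑ)) {L : ℝ} (hL : 0 ≤ L)
    (hγw : ∀ i, ∀ s ∈ Icc t₀ ϑ, ∀ τ ∈ Icc t₀ ϑ,
      dist (γ i s) (γ i τ) ≤ L * |s - τ| + dist (w s) (w τ))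
    {c : ℝ} (hc : 0 < c) :
    ∀ᵐ τ ∂volume.restrict (Icc t₀ ϑ), ∀ ε > 0, ∃ δ > 0, ∀ a b : ℝ,
      a ∈ Icc t₀ ϑ → b ∈ Icc t₀ ϑ → b > a → max |b - τ| |a - τ| / (b - a) ≤ c →
      |a - τ| < δ → |b - τ| < δ → ∀ i,
        ‖(b - a)⁻¹ • (∫ s in a..b, Φ (γ i s)) - Φ (γ i τ)‖ < ε := by
  filter_upwards [ae_restrict_cone_intervalAverage_norm_sub_lt measurableSet_Icc hw hc,
    ae_restrict_mem measurableSet_Icc] with τ hτ hτI ε hε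
  obtain ⟨C, hC0, hC⟩ := hK.exists_dist_le_add_mul_dist hΦ (half_pos hε)
  obtain ⟨δ, hδ, hδw⟩ := hτ (ε / 4 / (C + 1)) (by positivity)
  refine ⟨min δ (ε / 4 / (C * L + 1)), by positivity,
    fun a b ha hb hab hcone haδ hbδ i => ?_⟩
  set r := max |b - τ| |a - τ|
  have hsub : Icc a b ⊆ Icc t₀ ϑ := Icc_subset_Icc ha.1 hb.2
  have hr : r < min δ (ε / 4 / (C * L + 1)) := max_lt hbδ haδ
  have hpt : ∀ s ∈ Icc a b,
      ‖Φ (γ i s) - Φ (γ i τ)‖ ≤ (ε / 2 + C * L * r) + C * ‖w s - w τ‖ := by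
    intro s hs
    have hsτ : |s - τ| ≤ r := by
      simpa only [mem_closedBall, Real.dist_eq] using Icc_subset_closedBall_max_abs_sub a b τ hs
    rw [← dist_eq_norm, ← dist_eq_norm]
    calc dist (Φ (γ i s)) (Φ (γ i τ)) ≤ ε / 2 + C * dist (γ i s) (γ i τ) :=
          hC _ (hγK i (hsub hs)) _ (hγK i hτI)
      _ ≤ ε / 2 + C * (L * r + dist (w s) (w τ)) := by grw [hγw i s (hsub hs) τ hτI, hsτ]
      _ = (ε / 2 + C * L * r) + C * dist (w s) (w τ) := by ring
  have hwτ : IntegrableOn (fun s => ‖w s - w τ‖) (Icc a b) :=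
    ((hw.mono_set hsub).sub (integrableOn_const (C := w τ) measure_Icc_lt_top.ne)).norm
  have havg := hδw a b hsub hab ((div_le_iff₀ (sub_pos.2 hab)).1 hcone)
    (hr.trans_le (min_le_left _ _))
  calc _ ≤ (ε / 2 + C * L * r) + C * ((b - a)⁻¹ * ∫ s in a..b, ‖w s - w τ‖) :=
        norm_intervalAverage_sub_le hab ((hΦγ i).mono_set hsub) hwτ hpt
    _ < ε := by
      linarith [mul_lt_of_le_div_add_one (by positivity) (by positivity : 0 < ε / 4)
          (hr.trans_le (min_le_right _ _)).le,
        mul_lt_of_le_div_add_one hC0 (by positivity : 0 < ε / 4) havg.le]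

theorem cone_lebesgue_point_uniform_general (t₀ ϑ : ℝ)
    (n p q : ℕ)
    (G : Set (ℝ × EuclideanSpace ℝ (Fin n))) (hG : IsCompact G)
    (P : Set (EuclideanSpace ℝ (Fin p))) (hP : IsCompact P)
    (Q : Set (EuclideanSpace ℝ (Fin q))) (hQ : IsCompact Q)
    (f : ℝ → EuclideanSpace ℝ (Fin n) → EuclideanSpace ℝ (Fin p) →
         EuclideanSpace ℝ (Fin q) → EuclideanSpace ℝ (Fin n))
    (hf : Continuous fun z : ℝ × EuclideanSpace ℝ (Fin n) × EuclideanSpace ℝ (Fin p) ×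
         EuclideanSpace ℝ (Fin q) => f z.1 z.2.1 z.2.2.1 z.2.2.2)
    (κ : ℝ)
    (X : Set (ℝ → EuclideanSpace ℝ (Fin n)))
    (hXG : ∀ x ∈ X, ∀ τ ∈ Icc t₀ ϑ, (τ, x τ) ∈ G)
    (hXLip : ∀ x ∈ X, ∀ τ ∈ Icc t₀ ϑ, ∀ s ∈ Icc t₀ ϑ, ‖x τ - x s‖ ≤ κ * |τ - s|)
    (v : ℝ → EuclideanSpace ℝ (Fin q)) (hv : Measurable v)
    (hvQ : ∀ s ∈ Icc t₀ ϑ, v s ∈ Q)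
    (c : ℝ) (hc : 1/2 ≤ c) :
    ∀ᵐ τ ∂(volume.restrict (Icc t₀ ϑ)),
      ∀ ε > 0, ∃ δ > 0, ∀ a b : ℝ, a ∈ Icc t₀ ϑ → b ∈ Icc t₀ ϑ → b > a →
        max |b - τ| |a - τ| / (b - a) ≤ c → |a - τ| < δ → |b - τ| < δ →
        ∀ u ∈ P, ∀ x ∈ X,
          ‖(b - a)⁻¹ • (∫ s in a..b, f s (x s) u (v s)) - f τ (x τ) u (v τ)‖ < ε := by
  set I := Icc t₀ ϑ
  set K := I ×ˢ ((Prod.snd '' G) ×ˢ (P ×ˢ Q))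
  have hK : IsCompact K := isCompact_Icc.prod ((hG.image continuous_snd).prod (hP.prod hQ))
  have hXdist : ∀ x ∈ X, ∀ s ∈ I, ∀ τ ∈ I, dist (x s) (x τ) ≤ |κ| * |s - τ| :=
    fun x hx s hs τ hτ => by grw [dist_eq_norm, hXLip x hx s hs τ hτ, ← le_abs_self κ]
  set γ : X × P → ℝ → _ := fun i s => (s, i.1.1 s, i.2.1, v s)
  have hγK : ∀ i, MapsTo (γ i) I K := fun i s hs =>
    ⟨hs, ⟨_, hXG _ i.1.2 s hs, rfl⟩, i.2.2, hvQ s hs⟩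
  have hXcont : ∀ x ∈ X, ContinuousOn x I := fun x hx =>
    (LipschitzOnWith.of_dist_le_mul (K := Real.nnabs κ) <| by
      simpa only [Real.coe_nnabs, Real.dist_eq] using hXdist x hx).continuousOn
  have hγ : ∀ i, AEStronglyMeasurable (γ i) (volume.restrict I) := fun i =>
    aestronglyMeasurable_id.prodMk (((hXcont _ i.1.2).aestronglyMeasurable measurableSet_Icc).prodMk
      (aestronglyMeasurable_const.prodMk hv.aestronglyMeasurable))
  have hγv : ∀ i, ∀ s ∈ I, ∀ τ ∈ I,
      dist (γ i s) (γ i τ) ≤ (1 + |κ|) * |s - τ| + dist (v s) (v τ) := fun i s hs τ hτ => by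
      grw [dist_prod_prod_prod_le, hXdist _ i.1.2 s hs τ hτ, Real.dist_eq]
      linarith
  filter_upwards [ae_restrict_uniform_cone_average_sub_lt hK hf.continuousOn hγK
    (fun i => hf.integrableOn_comp_of_mapsTo hK measurableSet_Icc measure_Icc_lt_top (hγ i)
      (hγK i))
    (continuous_id.integrableOn_comp_of_mapsTo hQ measurableSet_Icc measure_Icc_lt_top
      hv.aestronglyMeasurable hvQ) (by positivity) hγv (by linarith : 0 < c)] with τ hτ ε hε
  obtain ⟨δ, hδ, hδγ⟩ := hτ ε hε
  exact ⟨δ, hδ, fun a b ha hb hab hcone haδ hbδ u hu x hx =>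
    hδγ a b ha hb hab hcone haδ hbδ (⟨x, hx⟩, ⟨u, hu⟩)⟩

/-- Lemma 2 of the paper: a uniform (over `u ∈ P` and over the equi-Lipschitz family
`X` of trajectories with graphs in the compact set `G`) cone Lebesgue-differentiation
statement for `s ↦ f(s, x s, u, v s)`. -/
theorem cone_lebesgue_point_uniform (t₀ ϑ : ℝ) (hT : t₀ ≤ ϑ)
    (n p q : ℕ)
    (G : Set (ℝ × EuclideanSpace ℝ (Fin n))) (hG : IsCompact G)
    (P : Set (EuclideanSpace ℝ (Fin p))) (hP : IsCompact P)
    (Q : Set (EuclideanSpace ℝ (Fin q))) (hQ : IsCompact Q)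
    (f : ℝ → EuclideanSpace ℝ (Fin n) → EuclideanSpace ℝ (Fin p) →
         EuclideanSpace ℝ (Fin q) → EuclideanSpace ℝ (Fin n))
    (hf : Continuous fun z : ℝ × EuclideanSpace ℝ (Fin n) × EuclideanSpace ℝ (Fin p) ×
         EuclideanSpace ℝ (Fin q) => f z.1 z.2.1 z.2.2.1 z.2.2.2)
    (κ : ℝ)
    (hκ : ∀ z ∈ G, ∀ u ∈ P, ∀ w ∈ Q, ‖f z.1 z.2 u w‖ ≤ κ)
    (X : Set (ℝ → EuclideanSpace ℝ (Fin n)))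
    (hXG : ∀ x ∈ X, ∀ τ ∈ Icc t₀ ϑ, (τ, x τ) ∈ G)
    (hXLip : ∀ x ∈ X, ∀ τ ∈ Icc t₀ ϑ, ∀ s ∈ Icc t₀ ϑ, ‖x τ - x s‖ ≤ κ * |τ - s|)
    (v : ℝ → EuclideanSpace ℝ (Fin q)) (hv : Measurable v)
    (hvQ : ∀ s ∈ Icc t₀ ϑ, v s ∈ Q)
    (c : ℝ) (hc : 1/2 ≤ c) :
    ∀ᵐ τ ∂(volume.restrict (Icc t₀ ϑ)),
      ∀ ε > 0, ∃ δ > 0, ∀ a b : ℝ, a ∈ Icc t₀ ϑ → b ∈ Icc t₀ ϑ → b > a →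
        max |b - τ| |a - τ| / (b - a) ≤ c → |a - τ| < δ → |b - τ| < δ →
        ∀ u ∈ P, ∀ x ∈ X,
          ‖(b - a)⁻¹ • (∫ s in a..b, f s (x s) u (v s)) - f τ (x τ) u (v τ)‖ < ε :=
  cone_lebesgue_point_uniform_general t₀ ϑ n p q G hG P hP Q hQ f hf κ X hXG hXLip v hv hvQ c hc
end

section
/- Every partition Δ = (τ_i)_{i=0}^{n} of an interval [t₀, ϑ] (with τ₀ = t₀ < τ₁ < … < τ_n = ϑ) admits a subpartition Δ′ ⊆ Δ (obtained by removing some interior points) such that diam(Δ′)/diamin(Δ′) ≤ 3 and diam(Δ′) ≤ 3·diam(Δ), where diam denotes the maximal step τ_i − τ_{i−1} of the partition and diamin denotes the minimal step among the steps τ_i − τ_{i−1} for i from 1 to n−1. -/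
/-!
Let `d` be the largest step of `Δ` and add the points of `Δ` one at a time. The new point
`τ (n + 1)` replaces the last kept point if it lies within `2d` of the one before, and is
appended otherwise; in that case the old last step exceeds `d`, because `τ (n + 1) - τ n ≤ d`.
So every step of `Δ'` is at most `2d` and every step but the last exceeds `d`, whence
`diam Δ' ≤ 2d ≤ 2 diamin Δ'`.
-/

open Set

/-- The maximal step `max_{1 ≤ i ≤ n} (σ i − σ (i-1))` of a partition with points
`σ 0, …, σ n`. -/
noncomputable def pdiam (n : ℕ) (σ : ℕ → ℝ) : ℝ :=
  sSup {d : ℝ | ∃ i < n, d = σ (i + 1) - σ i}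

/-- The minimal step among the steps `σ i − σ (i-1)` for `i` from `1` to `n−1`
(the last step is excluded). -/
noncomputable def pdiamin (n : ℕ) (σ : ℕ → ℝ) : ℝ :=
  sInf {d : ℝ | ∃ i, i + 1 < n ∧ d = σ (i + 1) - σ i}

section Diam

variable {n : ℕ} {σ : ℕ → ℝ} {c : ℝ}

theorem sub_le_pdiam {i : ℕ} (hi : i < n) : σ (i + 1) - σ i ≤ pdiam n σ := by
  refine le_csSup ?_ ⟨i, hi, rfl⟩
  refine ((finite_Iio n).image fun i => σ (i + 1) - σ i).bddAbove.mono ?_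
  rintro _ ⟨j, hj, rfl⟩
  exact ⟨j, hj, rfl⟩

theorem pdiam_le (hn : 1 ≤ n) (h : ∀ i < n, σ (i + 1) - σ i ≤ c) : pdiam n σ ≤ c :=
  csSup_le ⟨_, 0, hn, rfl⟩ fun _ ⟨i, hi, hd⟩ => hd ▸ h i hi

theorem le_pdiamin (hn : 2 ≤ n) (h : ∀ i, i + 1 < n → c ≤ σ (i + 1) - σ i) :
    c ≤ pdiamin n σ :=
  le_csInf ⟨_, 0, hn, rfl⟩ fun _ ⟨i, hi, hd⟩ => hd ▸ h i hi

end Diam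

structure IsThinning (τ : ℕ → ℝ) (n : ℕ) (d : ℝ) (m : ℕ) (σ : ℕ → ℝ) : Prop where
  one_le : 1 ≤ m
  zero : σ 0 = τ 0
  last : σ m = τ n
  mem : ∀ i ≤ m, ∃ j ≤ n, σ i = τ j
  strictMono : ∀ i < m, σ i < σ (i + 1)
  step_le : ∀ i < m, σ (i + 1) - σ i ≤ 2 * d
  lt_step : ∀ i, i + 1 < m → d < σ (i + 1) - σ i

namespace IsThinning

open Function

variable {τ : ℕ → ℝ} {n : ℕ} {d : ℝ} {k : ℕ} {σ : ℕ → ℝ}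

theorem one (hmono : τ 0 < τ 1) (hstep : τ 1 - τ 0 ≤ d) : IsThinning τ 1 d 1 τ where
  one_le := le_rfl
  zero := rfl
  last := rfl
  mem i hi := ⟨i, hi, rfl⟩
  strictMono i hi := by rwa [Nat.lt_one_iff.1 hi]
  step_le i hi := by rw [Nat.lt_one_iff.1 hi]; linarith
  lt_step i hi := by omega

theorem replace_last (h : IsThinning τ n d (k + 1) σ) (hmono : τ n < τ (n + 1))
    (hle : τ (n + 1) - σ k ≤ 2 * d) :
    IsThinning τ (n + 1) d (k + 1) (update σ (k + 1) (τ (n + 1))) := by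
  have keep : ∀ i ≠ k + 1, update σ (k + 1) (τ (n + 1)) i = σ i := fun i hi => update_of_ne hi _ _
  refine ⟨h.one_le, (keep 0 (by omega)).trans h.zero, update_self .., ?_, ?_, ?_, ?_⟩
  · intro i hi
    rcases eq_or_ne i (k + 1) with rfl | hne
    · exact ⟨n + 1, le_rfl, update_self ..⟩
    · obtain ⟨j, hj, hσj⟩ := h.mem i hi
      exact ⟨j, by omega, (keep i hne).trans hσj⟩
  · intro i hi
    rcases Nat.lt_succ_iff_lt_or_eq.1 hi with hi | rfl
    · rw [keep i (by omega), keep (i + 1) (by omega)]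
      exact h.strictMono i (by omega)
    · rw [keep i (by omega), update_self]
      exact (h.strictMono i hi).trans_eq h.last |>.trans hmono
  · intro i hi
    rcases Nat.lt_succ_iff_lt_or_eq.1 hi with hi | rfl
    · rw [keep i (by omega), keep (i + 1) (by omega)]
      exact h.step_le i (by omega)
    · rwa [keep i (by omega), update_self]
  · intro i hi
    rw [keep i (by omega), keep (i + 1) (by omega)]
    exact h.lt_step i hi

theorem append (h : IsThinning τ n d (k + 1) σ) (hmono : τ n < τ (n + 1))
    (hstep : τ (n + 1) - τ n ≤ d) (hgt : 2 * d < τ (n + 1) - σ k) :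
    IsThinning τ (n + 1) d (k + 2) (update σ (k + 2) (τ (n + 1))) := by
  have keep : ∀ i ≠ k + 2, update σ (k + 2) (τ (n + 1)) i = σ i := fun i hi => update_of_ne hi _ _
  refine ⟨by omega, (keep 0 (by omega)).trans h.zero, update_self .., ?_, ?_, ?_, ?_⟩
  · intro i hi
    rcases eq_or_ne i (k + 2) with rfl | hne
    · exact ⟨n + 1, le_rfl, update_self ..⟩
    · obtain ⟨j, hj, hσj⟩ := h.mem i (by omega)
      exact ⟨j, by omega, (keep i hne).trans hσj⟩
  · intro i hi
    rcases Nat.lt_succ_iff_lt_or_eq.1 hi with hi | rfl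
    · rw [keep i (by omega), keep (i + 1) (by omega)]
      exact h.strictMono i hi
    · rw [keep (k + 1) (by omega), update_self, h.last]
      exact hmono
  · intro i hi
    rcases Nat.lt_succ_iff_lt_or_eq.1 hi with hi | rfl
    · rw [keep i (by omega), keep (i + 1) (by omega)]
      exact h.step_le i hi
    · rw [keep (k + 1) (by omega), update_self, h.last]
      linarith
  · intro i hi
    rw [keep i (by omega), keep (i + 1) (by omega)]
    rcases Nat.lt_succ_iff_lt_or_eq.1 (Nat.succ_lt_succ_iff.1 hi) with hi | rfl
    · exact h.lt_step i (by omega)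
    · rw [h.last]
      linarith

end IsThinning

open IsThinning in
theorem exists_isThinning {τ : ℕ → ℝ} {n : ℕ} {d : ℝ} (hn : 1 ≤ n)
    (hmono : ∀ i < n, τ i < τ (i + 1)) (hstep : ∀ i < n, τ (i + 1) - τ i ≤ d) :
    ∃ m σ, IsThinning τ n d m σ := by
  induction n, hn using Nat.le_induction with
  | base => exact ⟨1, τ, one (hmono 0 one_pos) (hstep 0 one_pos)⟩
  | succ n hn ih =>
    obtain ⟨m, σ, h⟩ := ih (fun i hi => hmono i (by omega)) (fun i hi => hstep i (by omega))
    obtain ⟨k, rfl⟩ : ∃ k, m = k + 1 := Nat.exists_eq_add_of_le' h.one_le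
    by_cases hle : τ (n + 1) - σ k ≤ 2 * d
    · exact ⟨_, _, h.replace_last (hmono n (by omega)) hle⟩
    · exact ⟨_, _, h.append (hmono n (by omega)) (hstep n (by omega)) (not_le.1 hle)⟩

/-- Every partition `Δ = (τ_i)_{i=0}^n` of `[t₀, ϑ]` can be thinned out to a
subpartition `Δ' ⊆ Δ` with `diam Δ' / diamin Δ' ≤ 3` and `diam Δ' ≤ 3 diam Δ`. -/
theorem partition_thinning (t₀ ϑ : ℝ) (n : ℕ) (hn : 1 ≤ n) (τ : ℕ → ℝ)
    (hmono : ∀ i < n, τ i < τ (i + 1)) (h0 : τ 0 = t₀) (hend : τ n = ϑ) :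
    ∃ (m : ℕ) (σ : ℕ → ℝ), 1 ≤ m ∧
      (∀ i < m, σ i < σ (i + 1)) ∧ σ 0 = t₀ ∧ σ m = ϑ ∧
      (∀ i ≤ m, ∃ j ≤ n, σ i = τ j) ∧
      (2 ≤ m → pdiam m σ ≤ 3 * pdiamin m σ) ∧
      pdiam m σ ≤ 3 * pdiam n τ := by
  have hd : 0 < pdiam n τ := (sub_pos.2 (hmono 0 hn)).trans_le (sub_le_pdiam hn)
  obtain ⟨m, σ, h⟩ := exists_isThinning hn hmono fun i hi => sub_le_pdiam hi
  have hdiam : pdiam m σ ≤ 2 * pdiam n τ := pdiam_le h.one_le h.step_le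
  refine ⟨m, σ, h.one_le, h.strictMono, h0 ▸ h.zero, hend ▸ h.last, h.mem, fun hm => ?_, by linarith⟩
  have hdiamin : pdiam n τ ≤ pdiamin m σ := le_pdiamin hm fun i hi => (h.lt_step i hi).le
  linarith
end

section
/- Consider the control system on T = [0,1]: ẋ₁ = u₁·v₁, ẋ₂ = max{0, x₁}·u₂·v₂ with x(0) = (0,0), where controls (u₁(τ), u₂(τ)) ∈ [−1,1]² and disturbances (v₁(τ), v₂(τ)) ∈ {−1,1}² are measurable functions of time, and the cost is γ(x(·)) = x₂(1). Then there exists a non-anticipatory quasi-strategy α (mapping disturbances v(·) to controls u(·) such that v = v′ on [0,τ] implies α(v) = α(v′) on [0,τ]) whose guaranteed result satisfies sup over disturbances v(·) of x₂(1; α(v), v) ≤ −1/2 + ε for every ε > 0; moreover no quasi-strategy guarantees a value below −1/2, so the optimal guaranteed result in the class of quasi-strategies equals −1/2. -/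
open MeasureTheory Set intervalIntegral

/-- Admissible disturbances: measurable with values in `{-1,1}²`. -/
def IsDisturbance (v : ℝ → ℝ × ℝ) : Prop :=
  Measurable v ∧ ∀ s, ((v s).1 = -1 ∨ (v s).1 = 1) ∧ ((v s).2 = -1 ∨ (v s).2 = 1)

/-- Admissible controls: measurable with values in `[-1,1]²`. -/
def IsControl (u : ℝ → ℝ × ℝ) : Prop :=
  Measurable u ∧ ∀ s, |(u s).1| ≤ 1 ∧ |(u s).2| ≤ 1

/-- First coordinate of the trajectory: `x₁(τ) = ∫₀^τ u₁ v₁`. -/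
noncomputable def traj1 (u v : ℝ → ℝ × ℝ) (τ : ℝ) : ℝ :=
  ∫ r in (0:ℝ)..τ, (u r).1 * (v r).1

/-- The cost `x₂(1) = ∫₀¹ max{0, x₁(s)} u₂(s) v₂(s) ds`. -/
noncomputable def cost (u v : ℝ → ℝ × ℝ) : ℝ :=
  ∫ s in (0:ℝ)..1, max 0 (traj1 u v s) * (u s).2 * (v s).2

/-- Non-anticipativity of a quasi-strategy: coincidence of disturbances on `[0,τ]`
implies coincidence of the controls on `[0,τ]`. -/
def NonAnticipatory (α : (ℝ → ℝ × ℝ) → (ℝ → ℝ × ℝ)) : Prop :=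
  ∀ τ ∈ Icc (0:ℝ) 1, ∀ v v' : ℝ → ℝ × ℝ, IsDisturbance v → IsDisturbance v' →
    (∀ s ∈ Icc (0:ℝ) τ, v s = v' s) → ∀ s ∈ Icc (0:ℝ) τ, α v s = α v' s

/-! Since `|u₁ v₁| ≤ 1`, the first coordinate satisfies `|x₁(s)| ≤ s`, so `|ẋ₂| ≤ s` and every
control yields `x₂(1) ≥ -∫₀¹ s ds = -1/2` against every disturbance. Conversely, the
(memoryless, hence non-anticipatory) response `u = (v₁, -v₂)` forces `x₁(s) = s` and
`ẋ₂ = -s`, so it attains `-1/2` exactly. -/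

section Bounds

variable {u v : ℝ → ℝ × ℝ}

lemma IsDisturbance.mul_self_eq_one (hv : IsDisturbance v) (s : ℝ) :
    (v s).1 * (v s).1 = 1 ∧ (v s).2 * (v s).2 = 1 := by
  obtain ⟨h1, h2⟩ := hv.2 s
  constructor
  · rcases h1 with h | h <;> simp [h]
  · rcases h2 with h | h <;> simp [h]

lemma IsDisturbance.abs_le_one (hv : IsDisturbance v) (s : ℝ) :
    |(v s).1| ≤ 1 ∧ |(v s).2| ≤ 1 :=
  ⟨abs_le_one_iff_mul_self_le_one.2 (hv.mul_self_eq_one s).1.le,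
    abs_le_one_iff_mul_self_le_one.2 (hv.mul_self_eq_one s).2.le⟩

variable (hu : ∀ s, |(u s).1| ≤ 1 ∧ |(u s).2| ≤ 1) (hv : ∀ s, |(v s).1| ≤ 1 ∧ |(v s).2| ≤ 1)
include hu hv

lemma abs_traj1_le {s : ℝ} (hs : 0 ≤ s) : |traj1 u v s| ≤ s := by
  have h := norm_integral_le_of_norm_le_const (a := 0) (b := s) (C := 1)
    (f := fun r => (u r).1 * (v r).1) fun r _ => by
      rw [Real.norm_eq_abs, abs_mul]
      exact mul_le_one₀ (hu r).1 (abs_nonneg _) (hv r).1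
  simpa [traj1, abs_of_nonneg hs] using h

lemma abs_cost_le_half : |cost u v| ≤ 1 / 2 := by
  have hbound : ∀ s ∈ Ioc (0:ℝ) 1, ‖max 0 (traj1 u v s) * (u s).2 * (v s).2‖ ≤ s := by
    intro s hs
    have hmax : |max 0 (traj1 u v s)| ≤ |traj1 u v s| := by
      rw [abs_of_nonneg (le_max_left _ _)]
      exact max_le (abs_nonneg _) (le_abs_self _)
    calc ‖max 0 (traj1 u v s) * (u s).2 * (v s).2‖
        = |max 0 (traj1 u v s)| * (|(u s).2| * |(v s).2|) := by
          rw [Real.norm_eq_abs, abs_mul, abs_mul, mul_assoc]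
      _ ≤ s * 1 :=
          mul_le_mul (hmax.trans (abs_traj1_le hu hv hs.1.le))
            (mul_le_one₀ (hu s).2 (abs_nonneg _) (hv s).2) (by positivity) hs.1.le
      _ = s := mul_one s
  calc |cost u v| ≤ ∫ s in (0:ℝ)..1, s :=
        norm_integral_le_of_norm_le zero_le_one (ae_of_all _ hbound) intervalIntegrable_id
    _ = 1 / 2 := by norm_num [integral_id]

end Bounds

section CounterStrategy

variable {v : ℝ → ℝ × ℝ}

def counterStrategy (v : ℝ → ℝ × ℝ) : ℝ → ℝ × ℝ := fun s => ((v s).1, -(v s).2)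

lemma nonAnticipatory_counterStrategy : NonAnticipatory counterStrategy :=
  fun _ _ _ _ _ _ heq s hs => by simp [counterStrategy, heq s hs]

lemma isControl_counterStrategy (hv : IsDisturbance v) : IsControl (counterStrategy v) :=
  ⟨hv.1.fst.prodMk hv.1.snd.neg, fun s => by simpa [counterStrategy] using hv.abs_le_one s⟩

lemma traj1_counterStrategy (hv : IsDisturbance v) (τ : ℝ) :
    traj1 (counterStrategy v) v τ = τ := by
  simp [traj1, counterStrategy, (hv.mul_self_eq_one _).1]

lemma cost_counterStrategy (hv : IsDisturbance v) : cost (counterStrategy v) v = -1 / 2 := by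
  have h : EqOn (fun s => max 0 (traj1 (counterStrategy v) v s) * (counterStrategy v s).2 * (v s).2)
      (fun s => -s) (uIcc 0 1) := by
    intro s hs
    rw [uIcc_of_le zero_le_one] at hs
    simp only [traj1_counterStrategy hv, max_eq_right hs.1, counterStrategy]
    linear_combination -s * (hv.mul_self_eq_one s).2
  rw [cost, integral_congr h, intervalIntegral.integral_neg]
  norm_num [integral_id]

end CounterStrategy

/-- In the example `ẋ₁ = u₁ v₁`, `ẋ₂ = max{0,x₁} u₂ v₂` on `[0,1]` with cost `x₂(1)`,
for every `ε > 0` some quasi-strategy guarantees `x₂(1) ≤ -1/2 + ε`, and no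
quasi-strategy guarantees a value below `-1/2`: the optimal guaranteed result in the
class of quasi-strategies equals `-1/2`. -/
theorem quasi_strategy_value_example :
    (∀ ε > (0:ℝ), ∃ α : (ℝ → ℝ × ℝ) → (ℝ → ℝ × ℝ), NonAnticipatory α ∧
      (∀ v, IsDisturbance v → IsControl (α v)) ∧
      (∀ v, IsDisturbance v → cost (α v) v ≤ -1/2 + ε)) ∧
    (∀ α : (ℝ → ℝ × ℝ) → (ℝ → ℝ × ℝ), NonAnticipatory α →
      (∀ v, IsDisturbance v → IsControl (α v)) →
      ∀ ε > (0:ℝ), ∃ v, IsDisturbance v ∧ cost (α v) v > -1/2 - ε) := by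
  refine ⟨fun ε hε => ⟨counterStrategy, nonAnticipatory_counterStrategy,
    fun v hv => isControl_counterStrategy hv, fun v hv => ?_⟩, fun α _ hα ε hε => ?_⟩
  · rw [cost_counterStrategy hv]
    linarith
  · obtain ⟨v, hv⟩ : ∃ v, IsDisturbance v :=
      ⟨fun _ => (1, 1), measurable_const, fun _ => ⟨Or.inr rfl, Or.inr rfl⟩⟩
    refine ⟨v, hv, ?_⟩
    linarith [(abs_le.1 (abs_cost_le_half (hα v hv).2 hv.abs_le_one)).1]
end
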